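/- For all real x with 0 < x < π/2, setting ρ = (8π − 24)/(π³ − 2π²), one has x < (3 − ρx²)·sin(x)/(2 + cos(x) − ρx²). -/

import Mathlib

/-!
Clearing the positive denominator, the claim is that the gap
`h(x) = (3 - ρx²) sin x - x (2 + cos x - ρx²)` is positive on `(0, π/2)`. Since `sin x ≤ x`,
`h` is increasing in `ρ`, and `0.1005 < ρ < 0.1006`. On `(0, 1.2]` the alternating Taylor bounds
for `sin` and `cos` bound `h` below by `x⁵` times a quadratic in `x²` that is positive as soon as
`ρ > 1/10`. On `[1.2, π/2]` the same bounds show `h'' < 0`, so `h` is strictly concave there;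
it is positive at `1.2`, and the value of `ρ` is exactly the one making `h(π/2) = 0`.
-/

open Real Set Finset

theorem nonneg_of_hasDerivAt_nonneg {f f' : ℝ → ℝ} (hf : ∀ y, HasDerivAt f (f' y) y)
    (h₀ : f 0 = 0) (hf' : ∀ y, 0 ≤ y → 0 ≤ f' y) {x : ℝ} (hx : 0 ≤ x) : 0 ≤ f x := by
  have hmono : MonotoneOn f (Ici 0) :=
    monotoneOn_of_hasDerivWithinAt_nonneg (convex_Ici 0)
      (HasDerivAt.continuousOn fun y _ ↦ hf y) (fun y _ ↦ (hf y).hasDerivWithinAt)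
      fun y hy ↦ hf' y (interior_subset hy)
  simpa [h₀] using hmono self_mem_Ici hx hx

noncomputable def sinTaylor (n : ℕ) (x : ℝ) : ℝ :=
  ∑ k ∈ range n, (-1) ^ k * x ^ (2 * k + 1) / (2 * k + 1).factorial

noncomputable def cosTaylor (n : ℕ) (x : ℝ) : ℝ :=
  ∑ k ∈ range n, (-1) ^ k * x ^ (2 * k) / (2 * k).factorial

theorem hasDerivAt_sinTaylor (n : ℕ) (x : ℝ) : HasDerivAt (sinTaylor n) (cosTaylor n x) x := by
  unfold sinTaylor cosTaylor
  refine HasDerivAt.fun_sum fun k _ ↦ ?_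
  refine (((hasDerivAt_pow (2 * k + 1) x).const_mul ((-1 : ℝ) ^ k)).div_const
    ((2 * k + 1).factorial : ℝ)).congr_deriv ?_
  rw [Nat.factorial_succ]
  push_cast
  field_simp

theorem hasDerivAt_cosTaylor_succ (n : ℕ) (x : ℝ) :
    HasDerivAt (cosTaylor (n + 1)) (-sinTaylor n x) x := by
  have hc : cosTaylor (n + 1) = fun y ↦
      ∑ k ∈ range n, (-1 : ℝ) ^ (k + 1) * y ^ (2 * k + 2) / (2 * k + 2).factorial + 1 := by
    ext y
    simp [cosTaylor, sum_range_succ', mul_add]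
  rw [hc, sinTaylor, ← sum_neg_distrib]
  refine (HasDerivAt.fun_sum fun k _ ↦ ?_).add_const 1
  refine (((hasDerivAt_pow (2 * k + 2) x).const_mul ((-1 : ℝ) ^ (k + 1))).div_const
    ((2 * k + 2).factorial : ℝ)).congr_deriv ?_
  rw [Nat.factorial_succ]
  push_cast
  field_simp
  ring

theorem sin_taylor_of_cos_taylor {n : ℕ} {s : ℝ}
    (hcos : ∀ y, 0 ≤ y → 0 ≤ s * (cos y - cosTaylor n y)) {x : ℝ} (hx : 0 ≤ x) :
    0 ≤ s * (sin x - sinTaylor n x) :=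
  nonneg_of_hasDerivAt_nonneg
    (fun y ↦ ((hasDerivAt_sin y).sub (hasDerivAt_sinTaylor n y)).const_mul s)
    (by simp [sinTaylor]) hcos hx

theorem cos_taylor_succ_of_sin_taylor {n : ℕ} {s : ℝ}
    (hsin : ∀ y, 0 ≤ y → 0 ≤ s * (sin y - sinTaylor n y)) {x : ℝ} (hx : 0 ≤ x) :
    0 ≤ -s * (cos x - cosTaylor (n + 1) x) :=
  nonneg_of_hasDerivAt_nonneg
    (fun y ↦ (((hasDerivAt_cos y).sub (hasDerivAt_cosTaylor_succ n y)).const_mul (-s)).congr_deriv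
      (by ring))
    (by simp [cosTaylor, sum_range_succ']) hsin hx

theorem sin_cos_taylor_alternating (n : ℕ) {x : ℝ} (hx : 0 ≤ x) :
    0 ≤ (-1) ^ (n + 1) * (cos x - cosTaylor (n + 1) x) ∧
      0 ≤ (-1) ^ (n + 1) * (sin x - sinTaylor (n + 1) x) := by
  induction n generalizing x with
  | zero =>
    have hcos : ∀ y : ℝ, 0 ≤ y → 0 ≤ (-1) ^ 1 * (cos y - cosTaylor 1 y) := fun y _ ↦ by
      simpa [cosTaylor] using cos_le_one y
    exact ⟨hcos x hx, sin_taylor_of_cos_taylor hcos hx⟩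
  | succ n ih =>
    have hcos : ∀ y : ℝ, 0 ≤ y → 0 ≤ (-1) ^ (n + 2) * (cos y - cosTaylor (n + 2) y) :=
      fun y hy ↦ by simpa [pow_succ] using cos_taylor_succ_of_sin_taylor (fun z hz ↦ (ih hz).2) hy
    exact ⟨hcos x hx, sin_taylor_of_cos_taylor hcos hx⟩

theorem taylor7_le_sin {x : ℝ} (hx : 0 ≤ x) : x - x^3/6 + x^5/120 - x^7/5040 ≤ sin x := by
  have := (sin_cos_taylor_alternating 3 hx).2
  norm_num [sinTaylor, sum_range_succ, Nat.factorial] at this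
  linarith

theorem cos_le_taylor8 {x : ℝ} (hx : 0 ≤ x) :
    cos x ≤ 1 - x^2/2 + x^4/24 - x^6/720 + x^8/40320 := by
  have := (sin_cos_taylor_alternating 4 hx).1
  norm_num [cosTaylor, sum_range_succ, Nat.factorial] at this
  linarith

noncomputable def frameGap (ρ x : ℝ) : ℝ := (3 - ρ * x ^ 2) * sin x - x * (2 + cos x - ρ * x ^ 2)

theorem frameGap_mono_left {x : ℝ} (hx : 0 ≤ x) : Monotone fun ρ ↦ frameGap ρ x := by
  intro a b hab
  have hdiff : frameGap b x - frameGap a x = (b - a) * x ^ 2 * (x - sin x) := by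
    unfold frameGap; ring
  have := mul_nonneg (mul_nonneg (sub_nonneg.2 hab) (sq_nonneg x)) (sub_nonneg.2 (sin_le hx))
  dsimp only
  linarith

theorem frameGap_pos_of_le {x : ℝ} (hx0 : 0 < x) (hx : x ≤ 1.2) : 0 < frameGap 0.1005 x := by
  have ht : 0 ≤ x ^ 2 := sq_nonneg x
  have ht' : x ^ 2 ≤ 1.44 := by nlinarith
  have hpoly : 0 < (3 - 0.1005 * x ^ 2) * (x - x^3/6 + x^5/120 - x^7/5040)
      - x * (2 + (1 - x^2/2 + x^4/24 - x^6/720 + x^8/40320) - 0.1005 * x ^ 2) := by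
    have hq : 0 < (0.1005/6 - 1/60) - (0.1005/120 - 1/1260) * x ^ 2
        + (0.1005/5040 - 1/40320) * (x ^ 2) ^ 2 := by nlinarith
    have := mul_pos (pow_pos hx0 5) hq
    linarith
  have hsin := mul_le_mul_of_nonneg_left (taylor7_le_sin hx0.le)
    (by linarith : (0:ℝ) ≤ 3 - 0.1005 * x ^ 2)
  have hcos := mul_le_mul_of_nonneg_left (cos_le_taylor8 hx0.le) hx0.le
  unfold frameGap
  nlinarith

noncomputable def frameGapDeriv2 (ρ y : ℝ) : ℝ :=
  ρ * (6 * y - 4 * y * cos y - (2 - y ^ 2) * sin y) + (y * cos y - sin y)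

theorem iterate_deriv_two_frameGap (ρ : ℝ) : deriv^[2] (frameGap ρ) = frameGapDeriv2 ρ := by
  have h₁ : ∀ y, HasDerivAt (frameGap ρ)
      ((2 - ρ * y ^ 2) * cos y + (1 - 2 * ρ) * y * sin y + 3 * ρ * y ^ 2 - 2) y := fun y ↦ by
    have h := (((hasDerivAt_pow 2 y).const_mul ρ).const_sub 3).mul (hasDerivAt_sin y) |>.sub
      ((hasDerivAt_id y).mul
        (((hasDerivAt_cos y).const_add 2).sub ((hasDerivAt_pow 2 y).const_mul ρ)))
    exact h.congr_deriv (by simp only [Pi.sub_apply, id_eq]; ring)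
  have h₂ : ∀ y, HasDerivAt
      (fun y ↦ (2 - ρ * y ^ 2) * cos y + (1 - 2 * ρ) * y * sin y + 3 * ρ * y ^ 2 - 2)
      (frameGapDeriv2 ρ y) y := fun y ↦ by
    have h := (((((hasDerivAt_pow 2 y).const_mul ρ).const_sub 2).mul (hasDerivAt_cos y)).add
      (((hasDerivAt_id y).const_mul (1 - 2 * ρ)).mul (hasDerivAt_sin y))).add
      ((hasDerivAt_pow 2 y).const_mul (3 * ρ)) |>.sub_const 2
    exact h.congr_deriv (by rw [frameGapDeriv2, id_eq]; ring)
  ext y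
  simp only [Function.iterate_succ, Function.iterate_zero, Function.comp_apply, id]
  rw [funext fun y ↦ (h₁ y).deriv, (h₂ y).deriv]

theorem frameGapDeriv2_mono_left {y : ℝ} (hy : 1 ≤ y) (hyπ : y ≤ π) :
    Monotone fun ρ ↦ frameGapDeriv2 ρ y := by
  intro a b hab
  have hsin := sin_nonneg_of_nonneg_of_le_pi (by linarith) hyπ
  have hu : 0 ≤ 6 * y - 4 * y * cos y - (2 - y ^ 2) * sin y := by
    nlinarith [sin_le_one y, cos_le_one y, mul_nonneg (sq_nonneg y) hsin]
  dsimp only [frameGapDeriv2]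
  nlinarith

theorem frameGapDeriv2_neg {y : ℝ} (hy : 1.2 ≤ y) (hy' : y ≤ 1.5708) :
    frameGapDeriv2 0.1006 y < 0 := by
  have hexpand : frameGapDeriv2 0.1006 y =
      0.6036 * y + (0.1006 * y ^ 2 - 1.2012) * sin y + 0.5976 * y * cos y := by
    unfold frameGapDeriv2; ring
  have hs := mul_le_mul_of_nonpos_left (taylor7_le_sin (by linarith : 0 ≤ y))
    (by nlinarith : 0.1006 * y ^ 2 - 1.2012 ≤ 0)
  have hc := mul_le_mul_of_nonneg_left (cos_le_taylor8 (by linarith : 0 ≤ y))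
    (by linarith : 0 ≤ 0.5976 * y)
  have hpoly : 0.6036 * y + (0.1006 * y ^ 2 - 1.2012) * (y - y^3/6 + y^5/120 - y^7/5040)
      + 0.5976 * y * (1 - y^2/2 + y^4/24 - y^6/720 + y^8/40320) < 0 := by
    have hu0 : (0:ℝ) ≤ y - 1.2 := by linarith
    have h37 : (0:ℝ) ≤ 0.3708 - (y - 1.2) := by linarith
    nlinarith [mul_nonneg h37 (pow_nonneg hu0 3), mul_nonneg h37 (pow_nonneg hu0 4),
      mul_nonneg h37 (pow_nonneg hu0 5), pow_nonneg hu0 2, pow_nonneg hu0 3,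
      pow_nonneg hu0 6, pow_nonneg hu0 7, pow_nonneg hu0 8, pow_nonneg hu0 9, hu0]
  linarith

theorem strictConcaveOn_frameGap {ρ : ℝ} (hρ : ρ ≤ 0.1006) :
    StrictConcaveOn ℝ (Icc 1.2 (π / 2)) (frameGap ρ) := by
  refine strictConcaveOn_of_deriv2_neg (convex_Icc _ _) (by unfold frameGap; fun_prop) ?_
  intro y hy
  rw [interior_Icc] at hy
  rw [iterate_deriv_two_frameGap]
  calc frameGapDeriv2 ρ y ≤ frameGapDeriv2 0.1006 y :=
        frameGapDeriv2_mono_left (by linarith [hy.1]) (by linarith [hy.2, pi_pos]) hρ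
    _ < 0 := frameGapDeriv2_neg hy.1.le (by linarith [hy.2, pi_lt_d6])

noncomputable def frameConst : ℝ := (8 * π - 24) / (π ^ 3 - 2 * π ^ 2)

theorem frameConst_mem_Ioo : frameConst ∈ Set.Ioo (0.1005 : ℝ) 0.1006 := by
  have h₁ := pi_gt_d6
  have h₂ := pi_lt_d6
  have hd : 0 < π ^ 3 - 2 * π ^ 2 := by nlinarith
  unfold frameConst
  constructor
  · rw [lt_div_iff₀ hd]
    nlinarith [sq_nonneg (π - 3.1415926), sq_nonneg (π - 3.1415927)]
  · rw [div_lt_iff₀ hd]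
    nlinarith [sq_nonneg (π - 3.1415926), sq_nonneg (π - 3.1415927)]

theorem frameGap_frameConst_pi_div_two : frameGap frameConst (π / 2) = 0 := by
  have h : π - 2 ≠ 0 := by linarith [pi_gt_three]
  simp only [frameGap, frameConst, sin_pi_div_two, cos_pi_div_two]
  field_simp
  ring

theorem frameGap_frameConst_pos {x : ℝ} (hx0 : 0 < x) (hx : x < π / 2) :
    0 < frameGap frameConst x := by
  obtain ⟨hρl, hρu⟩ := frameConst_mem_Ioo
  rcases le_or_gt x 1.2 with hle | hgt
  · exact (frameGap_pos_of_le hx0 hle).trans_le (frameGap_mono_left hx0.le hρl.le)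
  · have h12 : (1.2 : ℝ) < π / 2 := by linarith [pi_gt_d6]
    have hA : 0 < frameGap frameConst 1.2 :=
      (frameGap_pos_of_le (by norm_num) le_rfl).trans_le (frameGap_mono_left (by norm_num) hρl.le)
    have := (strictConcaveOn_frameGap hρu.le).lt_on_openSegment ⟨le_rfl, h12.le⟩ ⟨h12.le, le_rfl⟩
      h12.ne (by rw [openSegment_eq_Ioo h12]; exact ⟨hgt, hx⟩)
    rwa [frameGap_frameConst_pi_div_two, min_eq_right hA.le] at this

theorem trig_frame_upper (x : ℝ) (hx0 : 0 < x) (hx : x < Real.pi / 2) :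
    x < (3 - ((8*Real.pi - 24)/(Real.pi^3 - 2*Real.pi^2)) * x^2) * Real.sin x /
        (2 + Real.cos x - ((8*Real.pi - 24)/(Real.pi^3 - 2*Real.pi^2)) * x^2) := by
  have hgap := frameGap_frameConst_pos hx0 hx
  have hρ := frameConst_mem_Ioo.2
  have hcos : 0 < cos x := cos_pos_of_mem_Ioo ⟨by linarith, hx⟩
  have hx2 : x ^ 2 < 2.5 := by nlinarith [pi_lt_d6]
  unfold frameGap at hgap
  unfold frameConst at hgap hρ
  rw [lt_div_iff₀ (by nlinarith)]
  linarith
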